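/- Let O be a DVR with residue field F, A = O^n = A_1 × ... × A_s with A_i = O^{n_i}, T ⊆ A a local complete O-subalgebra of full O-rank, and J ⊆ T an ideal of finite index. If #F^× ≥ s−1 and each J_i = φ_i(J) is a principal ideal of T_i = φ_i(T), then #∏_{i=1}^s T_i/J_i ≥ #T/J. -/

import Mathlib

/-!
The heart of the proof is one `g ∈ J` whose image generates every `J_i`, built one index at a
time: if `g` works so far and `f ∈ J` maps to a generator of `J_a`, then in the local ring `T_i`
one has `(φ_i g, φ_i f) = (b)` with `φ_i g = b p`, `φ_i f = b q` and `p` or `q` a unit, so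
`φ_i (λ g + μ f)` generates it as soon as `λ̄ p̄ + μ̄ q̄ ≠ 0` in the residue field. Each index
excludes at most one point `(λ̄ : μ̄)` of `ℙ¹(F)`, which has `#F + 1 > s` points.
Then `#T/J ≤ #T/gT = #A/gA = ∏ #A_i/g_iA_i = ∏ #T_i/g_iT_i`, because `T ⊆ A` and `T_i ⊆ A_i`
have finite index (full rank, finite `F`) and `g` is a non-zero-divisor of `A`.
-/

set_option synthInstance.maxHeartbeats 400000

/-- The projection `T →ₐ[O] A_i = O^{n_i}` obtained by composing the inclusion of the
subalgebra `T ⊆ A = ∏ i, O^{n_i}` with the canonical projection `φ_i : A → A_i`. -/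
noncomputable def projAlgHom {O : Type*} [CommRing O] {s : ℕ} {n : Fin s → ℕ}
    (T : Subalgebra O (∀ i : Fin s, Fin (n i) → O)) (i : Fin s) :
    T →ₐ[O] (Fin (n i) → O) :=
  (Pi.evalAlgHom O (fun i => Fin (n i) → O) i).comp T.val

open IsLocalRing Ideal

theorem exists_smul_add_smul_ne_zero {k : Type*} [Field k] [Finite k] {ι : Type*}
    {V : ι → Type*} [∀ i, AddCommGroup (V i)] [∀ i, Module k (V i)]
    (s : Finset ι) (hs : s.card ≤ Nat.card k) (v w : ∀ i, V i)
    (hvw : ∀ i ∈ s, v i ≠ 0 ∨ w i ≠ 0) :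
    ∃ a b : k, ∀ i ∈ s, a • v i + b • w i ≠ 0 := by
  classical
  obtain ⟨i₀, hi₀, hvi₀⟩ | hv := em (∃ i ∈ s, v i = 0)
  swap
  · exact ⟨1, 0, fun i hi => by simpa using fun h => hv ⟨i, hi, h⟩⟩
  have := Fintype.ofFinite k
  -- Try the pairs `(a, 1)`: an index `i ≠ i₀` rules out at most one `a`, and `i₀` none at all.
  let bad : ι → k := fun i => if h : ∃ a : k, a • v i + w i = 0 then h.choose else 0
  have hcard : ((s.erase i₀).image bad).card < (Finset.univ : Finset k).card := by
    calc ((s.erase i₀).image bad).card ≤ (s.erase i₀).card := Finset.card_image_le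
      _ < s.card := Finset.card_erase_lt_of_mem hi₀
      _ ≤ _ := by rwa [Finset.card_univ, ← Nat.card_eq_fintype_card]
  obtain ⟨a, -, ha⟩ := Finset.exists_mem_notMem_of_card_lt_card hcard
  refine ⟨a, 1, fun i hi h0 => ?_⟩
  rw [one_smul] at h0
  by_cases hvi : v i = 0
  · rw [hvi, smul_zero, zero_add] at h0
    exact (hvw i hi).elim (· hvi) (· h0)
  have hex : ∃ a : k, a • v i + w i = 0 := ⟨a, h0⟩
  have hbad : bad i = a := (dif_pos hex).trans <|
    smul_left_injective k hvi (add_right_cancel (hex.choose_spec.trans h0.symm))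
  exact ha (Finset.mem_image.mpr ⟨i, Finset.mem_erase.mpr ⟨fun h => hvi (h ▸ hvi₀), hi⟩, hbad⟩)

theorem IsLocalRing.exists_isUnit_or_of_span_pair_eq {B : Type*} [CommRing B] [IsLocalRing B]
    {x y b : B} (h : span {x, y} = span {b}) :
    ∃ p q, x = b * p ∧ y = b * q ∧ (IsUnit p ∨ IsUnit q) := by
  obtain ⟨p, rfl⟩ := mem_span_singleton.mp (h ▸ subset_span (by simp) : x ∈ span {b})
  obtain ⟨q, rfl⟩ := mem_span_singleton.mp (h ▸ subset_span (by simp) : y ∈ span {b})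
  obtain ⟨u, v, huv⟩ := mem_span_pair.mp (h ▸ mem_span_singleton_self b : b ∈ span {b * p, b * q})
  by_cases hunit : IsUnit (u * p + v * q)
  · refine ⟨p, q, rfl, rfl, ?_⟩
    exact (isUnit_or_isUnit_of_isUnit_add hunit).imp isUnit_of_mul_isUnit_right
      isUnit_of_mul_isUnit_right
  · -- otherwise `b * (1 - (u * p + v * q)) = 0` with a unit factor, so `b = 0`
    have hb : b = 0 := (isUnit_one_sub_self_of_mem_nonunits _ hunit).mul_left_eq_zero.mp
      (by linear_combination -huv)
    exact ⟨1, 1, by simp [hb], by simp [hb], Or.inl isUnit_one⟩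

theorem IsLocalRing.residue_smul_of_isLocalHom {O B : Type*} [CommRing O] [IsLocalRing O]
    [CommRing B] [IsLocalRing B] [Algebra O B] [IsLocalHom (algebraMap O B)] (c : O) (z : B) :
    residue B (c • z) = residue O c • residue B z := by
  rw [Algebra.smul_def, map_mul, ← ResidueField.algebraMap_residue, ← Algebra.smul_def]

theorem exists_span_singleton_smul_add_smul_eq_span_pair {O : Type*} [CommRing O] [IsLocalRing O]
    [Finite (ResidueField O)] {ι : Type*} {B : ι → Type*} [∀ i, CommRing (B i)]
    [∀ i, IsLocalRing (B i)] [∀ i, Algebra O (B i)] [∀ i, IsLocalHom (algebraMap O (B i))]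
    (s : Finset ι) (hs : s.card ≤ Nat.card (ResidueField O)) (x y : ∀ i, B i)
    (h : ∀ i ∈ s, (span {x i, y i} : Ideal (B i)).IsPrincipal) :
    ∃ a b : O, ∀ i ∈ s, span {a • x i + b • y i} = span {x i, y i} := by
  have : ∀ i, ∃ d p q : B i, i ∈ s →
      span {x i, y i} = span {d} ∧ x i = d * p ∧ y i = d * q ∧ (IsUnit p ∨ IsUnit q) := by
    intro i
    by_cases hi : i ∈ s
    · obtain ⟨d, hd⟩ := (h i hi).principal
      rw [submodule_span_eq] at hd
      obtain ⟨p, q, hp, hq, hpq⟩ := exists_isUnit_or_of_span_pair_eq hd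
      exact ⟨d, p, q, fun _ => ⟨hd, hp, hq, hpq⟩⟩
    · exact ⟨0, 0, 0, fun h => absurd h hi⟩
  choose d p q hdpq using this
  obtain ⟨a', b', hab⟩ := exists_smul_add_smul_ne_zero s hs (fun i => residue (B i) (p i))
    (fun i => residue (B i) (q i)) fun i hi =>
      (hdpq i hi).2.2.2.imp (residue_ne_zero_iff_isUnit _).mpr (residue_ne_zero_iff_isUnit _).mpr
  obtain ⟨a, rfl⟩ := residue_surjective a'
  obtain ⟨b, rfl⟩ := residue_surjective b'
  refine ⟨a, b, fun i hi => ?_⟩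
  obtain ⟨hd, hx, hy, -⟩ := hdpq i hi
  have hunit : IsUnit (a • p i + b • q i) := by
    rw [← residue_ne_zero_iff_isUnit, map_add, residue_smul_of_isLocalHom,
      residue_smul_of_isLocalHom]
    exact hab i hi
  calc span {a • x i + b • y i} = span {d i * (a • p i + b • q i)} := by
        rw [hx, hy, mul_add, mul_smul_comm, mul_smul_comm]
    _ = span {x i, y i} := by rw [span_singleton_mul_right_unit hunit, hd]

theorem exists_mem_forall_map_eq_span_singleton {O R : Type*} [CommRing O] [IsLocalRing O]
    [Finite (ResidueField O)] [CommRing R] [Algebra O R] {ι : Type*} [Fintype ι]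
    (hι : Fintype.card ι ≤ Nat.card (ResidueField O)) {B : ι → Type*} [∀ i, CommRing (B i)]
    [∀ i, IsLocalRing (B i)] [∀ i, Algebra O (B i)] [∀ i, IsLocalHom (algebraMap O (B i))]
    (π : ∀ i, R →ₐ[O] B i) (hπ : ∀ i, Function.Surjective (π i)) (J : Ideal R)
    (hJ : ∀ i, (J.map (π i)).IsPrincipal) :
    ∃ g ∈ J, ∀ i, J.map (π i) = span {π i g} := by
  classical
  suffices ∀ s : Finset ι, ∃ g ∈ J, ∀ i ∈ s, J.map (π i) = span {π i g} by
    obtain ⟨g, hg, hgen⟩ := this Finset.univ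
    exact ⟨g, hg, fun i => hgen i (Finset.mem_univ i)⟩
  intro s
  induction s using Finset.induction_on with
  | empty => exact ⟨0, J.zero_mem, by simp⟩
  | insert a s ha IH =>
    obtain ⟨g, hgJ, hg⟩ := IH
    obtain ⟨f₀, hf₀⟩ := (hJ a).principal
    obtain ⟨f, hfJ, rfl⟩ := (mem_map_iff_of_surjective _ (hπ a)).mp
      (hf₀ ▸ Submodule.mem_span_singleton_self f₀)
    rw [submodule_span_eq] at hf₀
    have hle : ∀ i, ∀ z ∈ J, span {π i z} ≤ J.map (π i) := fun i z hz =>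
      (span_singleton_le_iff_mem _).mpr (mem_map_of_mem _ hz)
    have hpair : ∀ i ∈ insert a s, span {π i g, π i f} = J.map (π i) := by
      intro i hi
      rw [span_insert]
      obtain rfl | hi := Finset.mem_insert.mp hi
      · rw [sup_eq_right.mpr ((hle i g hgJ).trans hf₀.le), hf₀]
      · rw [sup_eq_left.mpr ((hle i f hfJ).trans (hg i hi).le), hg i hi]
    obtain ⟨c, d, hcd⟩ := exists_span_singleton_smul_add_smul_eq_span_pair (insert a s)
      ((Finset.card_le_univ _).trans hι) (fun i => π i g) (fun i => π i f)
      fun i hi => hpair i hi ▸ hJ i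
    refine ⟨c • g + d • f, J.add_mem (J.smul_of_tower_mem c hgJ) (J.smul_of_tower_mem d hfJ),
      fun i hi => ?_⟩
    rw [map_add, map_smul, map_smul, hcd i hi, hpair i hi]

theorem Ideal.card_quotient_pi {ι : Type*} [Fintype ι] {R : ι → Type*} [∀ i, CommRing (R i)]
    (I : ∀ i, Ideal (R i)) : Nat.card ((∀ i, R i) ⧸ pi I) = ∏ i, Nat.card (R i ⧸ I i) := by
  rw [← Nat.card_pi]
  refine Nat.card_congr ((Quotient.congrRight fun x y => ?_).trans (Setoid.piQuotientEquiv _).symm)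
  simp only [Setoid.piSetoid_apply, Submodule.quotientRel_def]
  rfl

theorem Ideal.card_quotient_span_singleton_pi {ι : Type*} [Fintype ι] {R : ι → Type*}
    [∀ i, CommRing (R i)] (x : ∀ i, R i) :
    Nat.card ((∀ i, R i) ⧸ span {x}) = ∏ i, Nat.card (R i ⧸ span {x i}) := by
  rw [← pi_span, card_quotient_pi]

theorem Ideal.toAddSubgroup_span_singleton {R : Type*} [CommRing R] (x : R) :
    (span {x}).toAddSubgroup = (AddMonoidHom.mulLeft x).range := by
  ext y; simp [mem_span_singleton', mul_comm]

theorem RingHom.card_quotient_span_singleton_eq_of_injective {R S : Type*} [CommRing R]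
    [CommRing S] (f : R →+* S) (hf : Function.Injective f)
    (hfi : f.toAddMonoidHom.range.index ≠ 0) {x : R} (hx : IsLeftRegular (f x)) :
    Nat.card (R ⧸ span {x}) = Nat.card (S ⧸ span {f x}) := by
  set L := f.toAddMonoidHom.range
  set φ := AddMonoidHom.mulLeft (f x)
  have hmap : (span {x}).toAddSubgroup.map f.toAddMonoidHom = L.map φ := by
    rw [toAddSubgroup_span_singleton, AddMonoidHom.map_range, AddMonoidHom.map_range]
    congr 1
    ext r
    simp [φ]
  have hR : Nat.card (R ⧸ span {x}) = (L.map φ).relIndex L := by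
    rw [← hmap, show L = (⊤ : AddSubgroup R).map f.toAddMonoidHom from
      f.toAddMonoidHom.range_eq_map, AddSubgroup.relIndex_map_map_of_injective _ _ hf,
      AddSubgroup.relIndex_top_right]
    rfl
  have hS : Nat.card (S ⧸ span {f x}) = φ.range.index := by
    rw [← toAddSubgroup_span_singleton]
    rfl
  have hle : L.map φ ≤ L := hmap ▸ AddSubgroup.map_le_range _ _
  -- `[S : φ L]` computed through `L` and through `φ S`
  have hidx := (AddSubgroup.relIndex_mul_index hle).trans (AddSubgroup.index_map_of_injective L hx)
  rw [hR, hS]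
  exact Nat.eq_of_mul_eq_mul_right (Nat.pos_of_ne_zero hfi) (hidx.trans (mul_comm _ _))

theorem IsDiscreteValuationRing.finite_quotient_span_singleton {O : Type*} [CommRing O]
    [IsDomain O] [IsDiscreteValuationRing O] [Finite (ResidueField O)] {c : O} (hc : c ≠ 0) :
    Finite (O ⧸ span {c}) := by
  obtain ⟨ϖ, hϖ⟩ := exists_irreducible O
  obtain ⟨n, hn⟩ := ideal_eq_span_pow_irreducible (span_singleton_eq_bot.not.mpr hc) hϖ
  refine IsLocalRing.finite_quotient_iff.mpr ⟨n, ?_⟩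
  rw [hn, (irreducible_iff_uniformizer ϖ).mp hϖ, span_singleton_pow]

theorem IsDiscreteValuationRing.finite_quotient_of_forall_exists_smul_mem {O M : Type*}
    [CommRing O] [IsDomain O] [IsDiscreteValuationRing O] [Finite (ResidueField O)]
    [AddCommGroup M] [Module O M] [Module.Finite O M] (N : Submodule O M)
    (h : ∀ a : M, ∃ c : O, c ≠ 0 ∧ c • a ∈ N) : Finite (M ⧸ N) := by
  have htors : Module.IsTorsion O (M ⧸ N) := by
    intro m
    obtain ⟨a, rfl⟩ := Submodule.Quotient.mk_surjective N m
    obtain ⟨c, hc, hca⟩ := h a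
    exact ⟨⟨c, mem_nonZeroDivisors_of_ne_zero hc⟩,
      (Submodule.Quotient.mk_smul N c a).symm.trans ((Submodule.Quotient.mk_eq_zero N).mpr hca)⟩
  obtain ⟨c, hcann, hc⟩ := Submodule.annihilator_top_inter_nonZeroDivisors htors
  have := finite_quotient_span_singleton (nonZeroDivisors.ne_zero hc)
  have hle : span {c} • (⊤ : Submodule O M) ≤ N := by
    refine Submodule.smul_le.mpr fun r hr a _ => ?_
    obtain ⟨d, rfl⟩ := mem_span_singleton'.mp hr
    rw [mul_smul]
    refine N.smul_mem d ((Submodule.Quotient.mk_eq_zero N).mp ?_)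
    rw [Submodule.Quotient.mk_smul]
    exact Submodule.mem_annihilator.mp hcann _ Submodule.mem_top
  have := Submodule.finite_quotient_smul (span {c}) (Module.Finite.fg_top (R := O) (M := M))
  exact Finite.of_surjective _ (Submodule.factor_surjective hle)

theorem Subalgebra.card_quotient_span_singleton_eq {O A : Type*} [CommRing O] [CommRing A]
    [Algebra O A] (S : Subalgebra O A) [Finite (A ⧸ Subalgebra.toSubmodule S)] {x : S}
    (hx : IsLeftRegular (x : A)) : Nat.card (S ⧸ span {x}) = Nat.card (A ⧸ span {(x : A)}) := by
  refine (S.val : S →+* A).card_quotient_span_singleton_eq_of_injective Subtype.val_injective ?_ hx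
  have hrange :
      (S.val : S →+* A).toAddMonoidHom.range = (Subalgebra.toSubmodule S).toAddSubgroup := by
    ext; simp
  have : Finite (A ⧸ (Subalgebra.toSubmodule S).toAddSubgroup) := ‹_›
  exact hrange ▸ AddSubgroup.index_ne_zero_of_finite

instance IsDiscreteValuationRing.infinite {O : Type*} [CommRing O] [IsDomain O]
    [IsDiscreteValuationRing O] : Infinite O :=
  ⟨fun _ => not_isField O (Finite.isField_of_domain O)⟩

theorem Subalgebra.isLeftRegular_of_finite_quotient {O κ : Type*} [CommRing O] [IsDomain O]
    [Infinite O] (B : Subalgebra O (κ → O)) (x : B) [Finite (B ⧸ span {x})] :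
    IsLeftRegular (x : κ → O) := by
  -- a vanishing coordinate of `x` would embed `O` into `B ⧸ (x)`
  have hx : ∀ j, (x : κ → O) j ≠ 0 := by
    intro j hj
    refine not_finite_iff_infinite.mpr ‹Infinite O› <| Finite.of_injective
      (fun c => Ideal.Quotient.mk (span {x}) (algebraMap O B c)) fun c d hcd => ?_
    obtain ⟨u, hu⟩ := mem_span_singleton'.mp (Ideal.Quotient.eq.mp hcd)
    simpa [hj, sub_eq_zero] using (congr_fun (congr_arg Subtype.val hu) j).symm
  exact Pi.isLeftRegular_iff.mpr fun j => (IsRegular.of_ne_zero (hx j)).left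

theorem isLocalHom_algebraMap_of_algHom {O B : Type*} [CommRing O] [CommRing B] [Algebra O B]
    (e : B →ₐ[O] O) : IsLocalHom (algebraMap O B) :=
  isLocalHom_of_leftInverse e e.commutes

theorem Ideal.finite_quotient_map_of_surjective {R S F : Type*} [CommRing R] [CommRing S]
    [FunLike F R S] [RingHomClass F R S] {f : F} (hf : Function.Surjective f) (J : Ideal R)
    [Finite (R ⧸ J)] : Finite (S ⧸ J.map f) :=
  Finite.of_surjective _ (quotientMap_surjective (f := (f : R →+* S)) (H := le_comap_map) hf)

theorem Nat.le_card_of_sub_one_le_card_units {k : Type*} [GroupWithZero k] [Finite k] {s : ℕ}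
    (h : s - 1 ≤ Nat.card kˣ) : s ≤ Nat.card k := by
  rw [Nat.card_units] at h
  have := Nat.card_pos (α := k)
  omega

section ProjAlgHom

variable {O : Type*} [CommRing O] {s : ℕ} {n : Fin s → ℕ}
  (T : Subalgebra O (∀ i : Fin s, Fin (n i) → O))

theorem isLocalHom_algebraMap_range_projAlgHom (i : Fin s) (hi : 0 < n i) :
    IsLocalHom (algebraMap O (projAlgHom T i).range) :=
  isLocalHom_algebraMap_of_algHom ((Pi.evalAlgHom O (fun _ => O) ⟨0, hi⟩).comp (Subalgebra.val _))

theorem isLocalRing_range_projAlgHom [Nontrivial O] [IsLocalRing T] (i : Fin s) (hi : 0 < n i) :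
    IsLocalRing (projAlgHom T i).range :=
  have : Nonempty (Fin (n i)) := ⟨⟨0, hi⟩⟩
  .of_surjective' _ (AlgHom.rangeRestrict_surjective (projAlgHom T i))

theorem exists_smul_mem_range_projAlgHom
    (hfull : ∀ a : (∀ i : Fin s, Fin (n i) → O), ∃ c : O, c ≠ 0 ∧ c • a ∈ T) (i : Fin s)
    (a : Fin (n i) → O) : ∃ c : O, c ≠ 0 ∧ c • a ∈ (projAlgHom T i).range := by
  classical
  obtain ⟨c, hc, hca⟩ := hfull (Pi.single i a)
  exact ⟨c, hc, ⟨⟨_, hca⟩, by simp [projAlgHom]⟩⟩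

theorem finite_residueField_of_finite_quotient [IsLocalRing O] (hn : ∀ i, 0 < n i) [IsLocalRing T]
    (J : Ideal T) (hJ : J ≠ ⊤) [Finite (T ⧸ J)] : Finite (ResidueField O) := by
  obtain ⟨i⟩ : Nonempty (Fin s) := by
    by_contra h
    have : Subsingleton (∀ i : Fin s, Fin (n i) → O) := by
      have := not_nonempty_iff.mp h; infer_instance
    exact not_subsingleton T inferInstance
  have := isLocalHom_algebraMap_of_algHom
    (((Pi.evalAlgHom O (fun _ => O) ⟨0, hn i⟩).comp (Pi.evalAlgHom O _ i)).comp T.val)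
  have : Finite (ResidueField T) :=
    Finite.of_surjective _ (Ideal.Quotient.factor_surjective (le_maximalIdeal hJ))
  exact Finite.of_injective _ (algebraMap (ResidueField O) (ResidueField T)).injective

theorem card_quotient_span_singleton_eq_prod [IsDomain O] [IsDiscreteValuationRing O]
    [Finite (ResidueField O)]
    (hfull : ∀ a : (∀ i : Fin s, Fin (n i) → O), ∃ c : O, c ≠ 0 ∧ c • a ∈ T) (g : T)
    [∀ i, Finite ((projAlgHom T i).range ⧸ span {(projAlgHom T i).rangeRestrict g})] :
    Nat.card (T ⧸ span {g}) =
      ∏ i, Nat.card ((projAlgHom T i).range ⧸ span {(projAlgHom T i).rangeRestrict g}) := by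
  have hreg : ∀ i, IsLeftRegular ((g : ∀ i : Fin s, Fin (n i) → O) i) := fun i =>
    Subalgebra.isLeftRegular_of_finite_quotient _ ((projAlgHom T i).rangeRestrict g)
  have := IsDiscreteValuationRing.finite_quotient_of_forall_exists_smul_mem
    (Subalgebra.toSubmodule T) hfull
  have := fun i => IsDiscreteValuationRing.finite_quotient_of_forall_exists_smul_mem
    (Subalgebra.toSubmodule (projAlgHom T i).range) (exists_smul_mem_range_projAlgHom T hfull i)
  calc Nat.card (T ⧸ span {g})
    _ = Nat.card ((∀ i : Fin s, Fin (n i) → O) ⧸ span {(g : ∀ i : Fin s, Fin (n i) → O)}) :=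
      T.card_quotient_span_singleton_eq (Pi.isLeftRegular_iff.mpr hreg)
    _ = ∏ i, Nat.card ((Fin (n i) → O) ⧸ span {(g : ∀ i : Fin s, Fin (n i) → O) i}) :=
      card_quotient_span_singleton_pi _
    _ = _ := Finset.prod_congr rfl fun i _ => by
      rw [Subalgebra.card_quotient_span_singleton_eq _ (hreg i)]
      rfl

end ProjAlgHom

theorem prod_card_quot_ge_card_quot_general
    {O : Type*} [CommRing O] [IsDomain O] [IsDiscreteValuationRing O]
    {s : ℕ} {n : Fin s → ℕ} (hn : ∀ i, 0 < n i)
    (T : Subalgebra O (∀ i : Fin s, Fin (n i) → O))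
    [IsLocalRing T]
    (hfull : ∀ a : (∀ i : Fin s, Fin (n i) → O), ∃ c : O, c ≠ 0 ∧ c • a ∈ T)
    (J : Ideal T) [Finite (T ⧸ J)]
    (hres : s - 1 ≤ Nat.card (IsLocalRing.ResidueField O)ˣ)
    (hprin : ∀ i : Fin s, (Ideal.map (projAlgHom T i).rangeRestrict J).IsPrincipal) :
    Nat.card (T ⧸ J) ≤
      ∏ i : Fin s, Nat.card
        ((projAlgHom T i).range ⧸ Ideal.map (projAlgHom T i).rangeRestrict J) := by
  have hfin := fun i => J.finite_quotient_map_of_surjective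
    (AlgHom.rangeRestrict_surjective (projAlgHom T i))
  obtain rfl | hJ := eq_or_ne J ⊤
  · have : Subsingleton (T ⧸ (⊤ : Ideal T)) := Ideal.Quotient.subsingleton_iff.mpr rfl
    rw [Nat.card_of_subsingleton (0 : T ⧸ (⊤ : Ideal T))]
    refine Finset.one_le_prod' fun i _ => ?_
    have := hfin i
    exact Nat.card_pos
  have := finite_residueField_of_finite_quotient T hn J hJ
  have := fun i => isLocalHom_algebraMap_range_projAlgHom T i (hn i)
  have := fun i => isLocalRing_range_projAlgHom T i (hn i)
  obtain ⟨g, hgJ, hg⟩ := exists_mem_forall_map_eq_span_singleton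
    (by simpa using Nat.le_card_of_sub_one_le_card_units hres)
    (fun i => (projAlgHom T i).rangeRestrict) (fun i => AlgHom.rangeRestrict_surjective _) J hprin
  simp only [hg] at hfin ⊢
  have hcard := card_quotient_span_singleton_eq_prod T hfull g
  have : Finite (T ⧸ span {g}) := Nat.finite_of_card_ne_zero <|
    hcard ▸ Finset.prod_ne_zero_iff.mpr fun i _ => Nat.card_pos.ne'
  exact hcard ▸ Nat.card_le_card_of_surjective _
    (Ideal.Quotient.factor_surjective ((span_singleton_le_iff_mem J).mpr hgJ))

/-- Theorem: with `O` a DVR with residue field `F`, `A = ∏_{i=1}^s O^{n_i}`, `T ⊆ A` a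
local complete `O`-subalgebra of full rank and `J ⊆ T` an ideal of finite index, if
`#F^× ≥ s - 1` and each `J_i = φ_i(J)` is a principal ideal of `T_i = φ_i(T)`, then
`#∏_{i=1}^s T_i/J_i ≥ #T/J`. -/
theorem prod_card_quot_ge_card_quot
    {O : Type*} [CommRing O] [IsDomain O] [IsDiscreteValuationRing O]
    {s : ℕ} {n : Fin s → ℕ} (hn : ∀ i, 0 < n i)
    (T : Subalgebra O (∀ i : Fin s, Fin (n i) → O))
    [IsLocalRing T] [IsAdicComplete (IsLocalRing.maximalIdeal T) T]
    (hfull : ∀ a : (∀ i : Fin s, Fin (n i) → O), ∃ c : O, c ≠ 0 ∧ c • a ∈ T)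
    (J : Ideal T) [Finite (T ⧸ J)]
    (hres : s - 1 ≤ Nat.card (IsLocalRing.ResidueField O)ˣ)
    (hprin : ∀ i : Fin s, (Ideal.map (projAlgHom T i).rangeRestrict J).IsPrincipal) :
    Nat.card (T ⧸ J) ≤
      ∏ i : Fin s, Nat.card
        ((projAlgHom T i).range ⧸ Ideal.map (projAlgHom T i).rangeRestrict J) :=
  prod_card_quot_ge_card_quot_general hn T hfull J hres hprin
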